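/- Let d ≥ 2 be an integer and k > 0 a real number. Let X and Y be independent random variables, X having the standard Gaussian distribution N(0,1) and Y having the chi-square distribution with d degrees of freedom (the Gamma distribution with shape d/2 and rate 1/2). Then P( X ≥ √(kY) ) ≤ Γ((d−1)/2) / ( 2 √(π k) · (1+k)^{(d−1)/2} · Γ(d/2) ). -/

import Mathlib

/-!
Conditioning on `Y`, independence turns the probability into `∫ P(X ≥ √(k y)) dγ(y)`, with
`γ` the law of `Y`. Mill's inequality `P(X ≥ t) ≤ φ(t) / t`, `φ` the standard normal density,
bounds the integrand by `(2πk)^(-1/2) y^(-1/2) e^(-ky/2)`; against the Gamma(d/2, 1/2) density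
this is again a Gamma integrand, of shape `(d-1)/2` and rate `(1+k)/2`, whose integral is explicit.
-/

open MeasureTheory ProbabilityTheory Real Set Filter

namespace ProbabilityTheory

lemma gaussianPDFReal_zero_one :
    gaussianPDFReal 0 1 = fun x => (√(2 * π))⁻¹ * exp (-x ^ 2 / 2) := by
  simp [gaussianPDFReal_def]

lemma hasDerivAt_neg_gaussianPDFReal_zero_one (x : ℝ) :
    HasDerivAt (fun x => -gaussianPDFReal 0 1 x) (x * gaussianPDFReal 0 1 x) x := by
  have h : HasDerivAt (fun x : ℝ => -x ^ 2 / 2) (-x) x := by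
    simpa using ((hasDerivAt_pow 2 x).neg.div_const 2).congr_deriv (by ring)
  rw [gaussianPDFReal_zero_one]
  exact (h.exp.const_mul _).neg.congr_deriv (by ring)

lemma tendsto_neg_gaussianPDFReal_zero_one_atTop :
    Tendsto (fun x => -gaussianPDFReal 0 1 x) atTop (nhds 0) := by
  have h : Tendsto (fun x : ℝ => -x ^ 2 / 2) atTop atBot :=
    (tendsto_neg_atBot_iff.mpr (tendsto_pow_atTop two_ne_zero)).atBot_div_const two_pos
  rw [gaussianPDFReal_zero_one]
  simpa using ((tendsto_exp_atBot.comp h).const_mul (√(2 * π))⁻¹).neg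

lemma integrableOn_Ioi_mul_gaussianPDFReal_zero_one {t : ℝ} (ht : 0 ≤ t) :
    IntegrableOn (fun x => x * gaussianPDFReal 0 1 x) (Ioi t) :=
  integrableOn_Ioi_deriv_of_nonneg' (fun x _ => hasDerivAt_neg_gaussianPDFReal_zero_one x)
    (fun x hx => mul_nonneg (ht.trans hx.le) (gaussianPDFReal_nonneg 0 1 x))
    tendsto_neg_gaussianPDFReal_zero_one_atTop

lemma integral_Ioi_mul_gaussianPDFReal_zero_one {t : ℝ} (ht : 0 ≤ t) :
    ∫ x in Ioi t, x * gaussianPDFReal 0 1 x = gaussianPDFReal 0 1 t := by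
  rw [integral_Ioi_of_hasDerivAt_of_tendsto' (fun x _ => hasDerivAt_neg_gaussianPDFReal_zero_one x)
    (integrableOn_Ioi_mul_gaussianPDFReal_zero_one ht) tendsto_neg_gaussianPDFReal_zero_one_atTop]
  ring

lemma gaussianReal_Ici_le {t : ℝ} (ht : 0 < t) :
    gaussianReal 0 1 (Ici t) ≤ ENNReal.ofReal (gaussianPDFReal 0 1 t / t) := by
  rw [gaussianReal_apply_eq_integral 0 one_ne_zero, integral_Ici_eq_integral_Ioi]
  refine ENNReal.ofReal_le_ofReal ?_
  calc ∫ x in Ioi t, gaussianPDFReal 0 1 x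
      ≤ ∫ x in Ioi t, t⁻¹ * (x * gaussianPDFReal 0 1 x) := by
        refine setIntegral_mono_on (integrable_gaussianPDFReal 0 1).integrableOn
          ((integrableOn_Ioi_mul_gaussianPDFReal_zero_one ht.le).const_mul _) measurableSet_Ioi
          fun x hx => ?_
        rw [← mul_assoc, ← div_eq_inv_mul]
        exact le_mul_of_one_le_left (gaussianPDFReal_nonneg 0 1 x) ((one_le_div ht).mpr hx.le)
    _ = gaussianPDFReal 0 1 t / t := by
        rw [integral_const_mul, integral_Ioi_mul_gaussianPDFReal_zero_one ht.le, inv_mul_eq_div]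

lemma IndepFun.measure_le_eq_lintegral {Ω β : Type*} [MeasurableSpace Ω] [MeasurableSpace β]
    {P : Measure Ω} [IsFiniteMeasure P] {X : Ω → ℝ} {Y : Ω → β} (hXY : IndepFun X Y P)
    (hX : Measurable X) (hY : Measurable Y) {f : β → ℝ} (hf : Measurable f) :
    P {ω | f (Y ω) ≤ X ω} = ∫⁻ y, P.map X (Ici (f y)) ∂P.map Y := by
  have hS : MeasurableSet {p : β × ℝ | f p.1 ≤ p.2} :=
    measurableSet_le (hf.comp measurable_fst) measurable_snd
  calc P {ω | f (Y ω) ≤ X ω} = P.map (fun ω => (Y ω, X ω)) {p | f p.1 ≤ p.2} := by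
        rw [Measure.map_apply (hY.prodMk hX) hS]; rfl
    _ = ((P.map Y).prod (P.map X)) {p | f p.1 ≤ p.2} := by
        rw [hXY.symm.map_prod_eq_prod_map_map hY.aemeasurable hX.aemeasurable]
    _ = _ := Measure.prod_apply hS

lemma ae_pos_gammaMeasure (a r : ℝ) : ∀ᵐ y ∂gammaMeasure a r, 0 < y := by
  rw [ae_iff]
  simp only [not_lt]
  change gammaMeasure a r (Iic 0) = 0
  rw [gammaMeasure, withDensity_apply _ measurableSet_Iic,
    setLIntegral_congr Iio_ae_eq_Iic.symm, lintegral_gammaPDF_of_nonpos le_rfl]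

lemma lintegral_rpow_mul_exp_neg_mul_gammaMeasure {a r p s : ℝ} (ha : 0 < a) (hr : 0 < r)
    (hap : 0 < a + p) (hrs : 0 < r + s) :
    ∫⁻ y, ENNReal.ofReal (y ^ p * exp (-(s * y))) ∂gammaMeasure a r
      = ENNReal.ofReal (r ^ a * Gamma (a + p) / (Gamma a * (r + s) ^ (a + p))) := by
  rw [← Measure.restrict_eq_self_of_ae_mem (s := Ioi 0) (ae_pos_gammaMeasure a r), gammaMeasure,
    restrict_withDensity measurableSet_Ioi, lintegral_withDensity_eq_lintegral_mul _
      (f := gammaPDF a r) (measurable_gammaPDFReal a r).ennreal_ofReal (by fun_prop)]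
  calc ∫⁻ y in Ioi 0, (gammaPDF a r * fun y => ENNReal.ofReal (y ^ p * exp (-(s * y)))) y
      = ∫⁻ y in Ioi 0,
          ENNReal.ofReal (r ^ a / Gamma a * (y ^ (a + p - 1) * exp (-((r + s) * y)))) := by
        refine setLIntegral_congr_fun measurableSet_Ioi fun y (hy : 0 < y) => ?_
        rw [Pi.mul_apply, gammaPDF_of_nonneg hy.le, ← ENNReal.ofReal_mul (by positivity)]
        congr 1
        rw [show a + p - 1 = (a - 1) + p by ring, rpow_add hy, add_mul, neg_add, exp_add]
        ring
    _ = ENNReal.ofReal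
          (r ^ a / Gamma a * ∫ y in Ioi 0, y ^ (a + p - 1) * exp (-((r + s) * y))) := by
        rw [← integral_const_mul, ofReal_integral_eq_lintegral_ofReal]
        · refine Integrable.const_mul ?_ _
          simpa only [IntegrableOn, rpow_one, neg_mul] using
            integrableOn_rpow_mul_exp_neg_mul_rpow (s := a + p - 1) (by linarith) one_pos hrs
        · filter_upwards [ae_restrict_mem measurableSet_Ioi] with y (hy : 0 < y)
          positivity
    _ = _ := by
        rw [integral_rpow_mul_exp_neg_mul_Ioi hap hrs, one_div, inv_rpow hrs.le]
        field_simp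

lemma gaussianPDFReal_sqrt_mul_div_sqrt_mul {k y : ℝ} (hk : 0 < k) (hy : 0 < y) :
    gaussianPDFReal 0 1 √(k * y) / √(k * y)
      = (√(2 * π * k))⁻¹ * (y ^ (-(1 / 2) : ℝ) * exp (-(k / 2 * y))) := by
  rw [gaussianPDFReal_zero_one]
  beta_reduce
  rw [sq_sqrt (by positivity), rpow_neg hy.le, ← sqrt_eq_rpow,
    sqrt_mul hk.le, sqrt_mul (by positivity) k]
  field_simp

lemma inv_sqrt_two_pi_mul_mul_half_rpow_div_eq {a k : ℝ} (hk : 0 < k) :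
    (√(2 * π * k))⁻¹ * ((1 / 2) ^ a * Gamma (a + -(1 / 2))
        / (Gamma a * (1 / 2 + k / 2) ^ (a + -(1 / 2))))
      = Gamma (a - 1 / 2) / (2 * √(π * k) * (1 + k) ^ (a - 1 / 2) * Gamma a) := by
  have hrate :
      (1 / 2 + k / 2 : ℝ) ^ (a - 1 / 2) = (1 / 2) ^ (a - 1 / 2) * (1 + k) ^ (a - 1 / 2) := by
    rw [← mul_rpow (by norm_num) (by positivity)]; ring_nf
  have hhalf : (1 / 2 : ℝ) ^ a = (1 / 2) ^ (a - 1 / 2) * (√2)⁻¹ := by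
    rw [sqrt_eq_rpow, ← inv_rpow zero_le_two, ← one_div, ← rpow_add one_half_pos]; ring_nf
  have hsqrt : √(2 * π * k) = √2 * √(π * k) := by rw [mul_assoc, sqrt_mul zero_le_two]
  rw [← sub_eq_add_neg, hrate, hhalf, hsqrt]
  field_simp
  rw [sq_sqrt zero_le_two]

end ProbabilityTheory

theorem gaussian_chiSq_tail_bound {Ω : Type*} [MeasurableSpace Ω] (P : Measure Ω)
    [IsProbabilityMeasure P] (d : ℕ) (hd : 2 ≤ d) (k : ℝ) (hk : 0 < k)
    (X Y : Ω → ℝ) (hXm : Measurable X) (hYm : Measurable Y)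
    (hXY : IndepFun X Y P)
    (hX : Measure.map X P = gaussianReal 0 1)
    (hY : Measure.map Y P = gammaMeasure ((d : ℝ) / 2) (1 / 2)) :
    P {ω | Real.sqrt (k * Y ω) ≤ X ω}
      ≤ ENNReal.ofReal (Real.Gamma (((d : ℝ) - 1) / 2) /
          (2 * Real.sqrt (Real.pi * k) * (1 + k) ^ (((d : ℝ) - 1) / 2) *
            Real.Gamma ((d : ℝ) / 2))) := by
  have hd' : (2 : ℝ) ≤ d := by exact_mod_cast hd
  have hmill : ∀ᵐ y ∂gammaMeasure ((d : ℝ) / 2) (1 / 2),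
      gaussianReal 0 1 (Ici √(k * y))
        ≤ ENNReal.ofReal
          ((√(2 * π * k))⁻¹ * (y ^ (-(1 / 2) : ℝ) * exp (-(k / 2 * y)))) := by
    filter_upwards [ae_pos_gammaMeasure _ _] with y hy
    rw [← gaussianPDFReal_sqrt_mul_div_sqrt_mul hk hy]
    exact gaussianReal_Ici_le (by positivity)
  rw [hXY.measure_le_eq_lintegral (f := fun y => √(k * y)) hXm hYm (by fun_prop), hX, hY]
  calc _ ≤ ∫⁻ y, ENNReal.ofReal
          ((√(2 * π * k))⁻¹ * (y ^ (-(1 / 2) : ℝ) * exp (-(k / 2 * y))))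
        ∂gammaMeasure ((d : ℝ) / 2) (1 / 2) := lintegral_mono_ae hmill
    _ = _ := by
      simp_rw [ENNReal.ofReal_mul (inv_nonneg.mpr (sqrt_nonneg _))]
      rw [lintegral_const_mul' _ _ ENNReal.ofReal_ne_top,
        lintegral_rpow_mul_exp_neg_mul_gammaMeasure (by positivity) (by norm_num) (by linarith)
          (by positivity), ← ENNReal.ofReal_mul (inv_nonneg.mpr (sqrt_nonneg _)),
        inv_sqrt_two_pi_mul_mul_half_rpow_div_eq hk, sub_div]
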